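/- Let (R, m) be a complete regular local ring containing a field, with minimal generators X_1, ..., X_n of m and coefficient field K. Given elements f_1, ..., f_n ∈ m such that the ideal (f_1,...,f_n) is m-primary, and a field embedding σ : K → R lifting a field homomorphism on residue fields, the unique continuous K-algebra-twisted endomorphism ψ of R = K[[X_1,...,X_n]] with ψ(X_i) = f_i and ψ|_K = σ is a finite ring map. -/

import Mathlib

/-!
Complete Nakayama: as `R` is `m`-adically complete and `ψ(m)R ⊆ m` is a proper ideal of the
Noetherian local ring `R`, the map `ψ` is finite as soon as `R ⧸ ψ(m)R` is finite over `R` via `ψ`.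
Since `ψ(m)R = (f₁, …, fₙ)` has radical `m`, the kernel of `R ⧸ ψ(m)R → R ⧸ m` is a finitely
generated nilideal, so it suffices that the residue field be finite over `R` via `ψ`; it is
finite already over `ψ(K) = σ(K)`.
-/

open IsLocalRing

section Pi

variable {R : Type*} [CommRing R] (I : Ideal R) {ι : Type*} [Finite ι]
  {M : ι → Type*} [∀ i, AddCommGroup (M i)] [∀ i, Module R (M i)]

theorem Submodule.mem_smul_top_pi_iff (x : ∀ i, M i) :
    x ∈ (I • ⊤ : Submodule R (∀ i, M i)) ↔ ∀ i, x i ∈ (I • ⊤ : Submodule R (M i)) := by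
  classical
  have := Fintype.ofFinite ι
  refine ⟨fun hx i => ?_, fun hx => ?_⟩
  · have hxi : x i ∈ (I • ⊤ : Submodule R (∀ i, M i)).map (LinearMap.proj i) :=
      Submodule.mem_map_of_mem hx
    rw [Submodule.map_smul''] at hxi
    exact Submodule.smul_mono le_rfl le_top hxi
  · rw [← Finset.univ_sum_single x]
    refine Submodule.sum_mem _ fun i _ => ?_
    have hxi : Pi.single i (x i) ∈ (I • ⊤ : Submodule R (M i)).map (LinearMap.single R M i) :=
      Submodule.mem_map_of_mem (hx i)
    rw [Submodule.map_smul''] at hxi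
    exact Submodule.smul_mono le_rfl le_top hxi

instance IsPrecomplete.pi [∀ i, IsPrecomplete I (M i)] : IsPrecomplete I (∀ i, M i) := by
  refine ⟨fun F hF => ?_⟩
  simp only [SModEq.sub_mem, Submodule.mem_smul_top_pi_iff] at hF ⊢
  have hlim (i : ι) : ∃ L : M i, ∀ n, F n i - L ∈ (I ^ n • ⊤ : Submodule R (M i)) := by
    simpa only [SModEq.sub_mem] using IsPrecomplete.prec' (I := I) (fun n => F n i)
      fun hmn => SModEq.sub_mem.mpr (hF hmn i)
  choose L hL using hlim
  exact ⟨L, fun n i => hL i n⟩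

end Pi

theorem RingHom.finite_of_finite_comp_quotient {A B : Type*} [CommRing A] [CommRing B]
    (φ : A →+* B) (I : Ideal A) [IsPrecomplete I A] [IsHausdorff (I.map φ) B]
    (h : ((Ideal.Quotient.mk (I.map φ)).comp φ).Finite) : φ.Finite := by
  let := φ.toAlgebra
  have : Module.Finite A (B ⧸ I.map φ) := RingHom.finite_algebraMap.mp h
  have : IsHausdorff I B := IsHausdorff.map_algebraMap_iff.mp ‹_›
  obtain ⟨n, g, hg⟩ := Module.Finite.exists_fin' A (B ⧸ I.map φ)
  obtain ⟨F, hF⟩ := Module.projective_lifting_property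
    (Ideal.Quotient.mkₐ A (I.map φ)).toLinearMap g (Ideal.Quotient.mkₐ_surjective A _)
  suffices Function.Surjective F from Module.Finite.of_surjective F this
  refine surjective_of_mkQ_comp_surjective (I := I) fun b => ?_
  obtain ⟨b, rfl⟩ := Submodule.mkQ_surjective _ b
  obtain ⟨c, hc⟩ := hg (Ideal.Quotient.mk _ b)
  refine ⟨c, ?_⟩
  have : Ideal.Quotient.mk (I.map φ) (F c) = Ideal.Quotient.mk _ b := by
    rw [← hc, ← hF]; rfl
  simpa [Submodule.Quotient.eq, Ideal.smul_top_eq_map, Ideal.Quotient.eq,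
    RingHom.algebraMap_toAlgebra] using this

theorem RingHom.finite_comp_quotient_of_finite_comp_quotient_radical {A B : Type*} [CommRing A]
    [CommRing B] (φ : A →+* B) (J : Ideal B) (hJ : J.radical.FG)
    (h : ((Ideal.Quotient.mk J.radical).comp φ).Finite) :
    ((Ideal.Quotient.mk J).comp φ).Finite := by
  let := φ.toAlgebra
  have : Module.Finite A (B ⧸ J.radical) := RingHom.finite_algebraMap.mp h
  have hker : RingHom.ker (Ideal.Quotient.factorₐ A J.le_radical)
      = J.radical.map (Ideal.Quotient.mk J) :=
    Ideal.Quotient.factor_ker J.le_radical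
  refine RingHom.finite_algebraMap.mpr <| Module.finite_of_surjective_of_ker_le_nilradical
    (Ideal.Quotient.factorₐ A J.le_radical) (Ideal.Quotient.factor_surjective J.le_radical) ?_
    (hker ▸ hJ.map _)
  rw [hker, Ideal.map_le_iff_le_comap]
  rintro x ⟨n, hn⟩
  exact ⟨n, by simpa [← map_pow, Ideal.Quotient.eq_zero_iff_mem] using hn⟩

theorem endomorphism_with_primary_image_is_finite_general
    (R : Type*) [CommRing R] [IsNoetherianRing R] [IsLocalRing R]
    [IsAdicComplete (maximalIdeal R) R]
    (n : ℕ)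
    (X : Fin n → R)
    (hXgen : Ideal.span (Set.range X) = maximalIdeal R)
    (K : Subring R)
    (σ : K →+* R)
    (hσres : ((residue R).comp σ).Finite)
    (f : Fin n → R)
    (hfprimary : (Ideal.span (Set.range f)).radical = maximalIdeal R)
    (ψ : R →+* R)
    (hψX : ∀ i, ψ (X i) = f i)
    (hψK : ∀ x : K, ψ (x : R) = σ x) :
    ψ.Finite := by
  have hmap : (maximalIdeal R).map ψ = Ideal.span (Set.range f) := by
    rw [← hXgen, Ideal.map_span, ← Set.range_comp]
    exact congrArg _ (congrArg _ (funext hψX))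
  have hrad : ((maximalIdeal R).map ψ).radical = maximalIdeal R := hmap ▸ hfprimary
  have : IsHausdorff ((maximalIdeal R).map ψ) R :=
    .of_isLocalRing _ _ fun h => (maximalIdeal.isMaximal R).ne_top <| by
      rw [← hrad, h, Ideal.radical_top]
  refine RingHom.finite_of_finite_comp_quotient ψ (maximalIdeal R) ?_
  refine RingHom.finite_comp_quotient_of_finite_comp_quotient_radical ψ _
    (hrad ▸ IsNoetherian.noetherian _) ?_
  have hres : ((residue R).comp ψ).comp K.subtype = (residue R).comp σ :=
    RingHom.ext fun x => congrArg (residue R) (hψK x)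
  rw [hrad]
  exact RingHom.Finite.of_comp_finite (hres ▸ hσres)

/-- Let `(R, m)` be a complete regular local ring containing a field, with minimal
generators `X₁,…,X_n` of `m` and coefficient field `K`.  Given `f₁,…,f_n ∈ m`
generating an `m`-primary ideal, and a field embedding `σ : K → R` lifting a field
homomorphism on residue fields inducing a finite residue extension, any (the unique
continuous) endomorphism `ψ` of `R` with `ψ(Xᵢ) = fᵢ` and `ψ|_K = σ` is finite. -/
theorem endomorphism_with_primary_image_is_finite
    (R : Type*) [CommRing R] [IsNoetherianRing R] [IsLocalRing R]
    [IsAdicComplete (maximalIdeal R) R]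
    (n : ℕ) (hn : ringKrullDim R = n)
    (X : Fin n → R) (hXm : ∀ i, X i ∈ maximalIdeal R)
    (hXgen : Ideal.span (Set.range X) = maximalIdeal R)
    (K : Subring R) (hKfield : IsField K)
    (hKcoeff : Function.Bijective fun x : K => residue R (x : R))
    (σ : K →+* R)
    (hσres : ((residue R).comp σ).Finite)
    (f : Fin n → R) (hfm : ∀ i, f i ∈ maximalIdeal R)
    (hfprimary : (Ideal.span (Set.range f)).radical = maximalIdeal R)
    (ψ : R →+* R) (hψloc : IsLocalHom ψ)
    (hψX : ∀ i, ψ (X i) = f i)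
    (hψK : ∀ x : K, ψ (x : R) = σ x) :
    ψ.Finite :=
  endomorphism_with_primary_image_is_finite_general R n X hXgen K σ hσres f hfprimary ψ hψX hψK
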